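/- arXiv:1911.03715 — 2 statements merged into one kernel-verified Lean document; each statement's English description precedes it below -/
import Mathlib

section
/- Let A, B, C be m×m complex idempotent matrices (A² = A, B² = B, C² = C). Then rank([A, B, C]) = rank(A) + rank(B) + rank(C) − rank([A·B, A·C]) − rank([B·A, B·C]) − rank([C·A, C·B]) + rank([A·B, A·C, B·A, B·C, C·A, C·B]), where [M₁, …, M_j] denotes the block row matrix formed by placing the matrices side by side. -/
/-!
For subspaces `P, Q, R`, `dim (P + Q + R) = dim P + dim Q + dim R - dim (P ∩ (Q + R)) - dim (Q ∩ R)`.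
With `U, V, W` the column spaces of `A, B, C`, the column spaces of `[AB, AC]`, `[BA, BC]`,
`[CA, CB]` are `U' = A(V + W)`, `V' = B(U + W)`, `W' = C(U + V)`, and the six-block matrix has
column space `U' + V' + W'`. Since an idempotent fixes its range pointwise,
`U ∩ (V + W) = U' ∩ (V' + W')` and `V ∩ W = V' ∩ W'`, so subtracting the dimension formulas for
`(U, V, W)` and `(U', V', W')` gives the identity.
-/

open Matrix Submodule LinearMap Module

section

variable {K E : Type*} [Field K] [AddCommGroup E] [Module K E]

theorem Submodule.finrank_sup_sup_add_finrank_inf_add_finrank_inf [FiniteDimensional K E]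
    (P Q R : Submodule K E) :
    finrank K ↥(P ⊔ (Q ⊔ R)) + finrank K ↥(P ⊓ (Q ⊔ R)) + finrank K ↥(Q ⊓ R) =
      finrank K P + finrank K Q + finrank K R := by
  have hP := finrank_sup_add_finrank_inf_eq P (Q ⊔ R)
  have hQR := finrank_sup_add_finrank_inf_eq Q R
  omega

theorem IsIdempotentElem.range_inf_le_map {f : Module.End K E}
    (hf : IsIdempotentElem f) (X : Submodule K E) : range f ⊓ X ≤ X.map f :=
  fun x ⟨hxf, hxX⟩ => ⟨x, hxX, hf.mem_range_iff.mp hxf⟩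

variable {a b c : Module.End K E}

theorem IsIdempotentElem.range_inf_range_eq_map_inf_map (hb : IsIdempotentElem b)
    (hc : IsIdempotentElem c) :
    range b ⊓ range c = (range a ⊔ range c).map b ⊓ (range a ⊔ range b).map c := by
  refine le_antisymm (le_inf ?_ ?_) (inf_le_inf map_le_range map_le_range)
  · exact (inf_le_inf_left _ le_sup_right).trans (hb.range_inf_le_map _)
  · exact (le_inf inf_le_right (inf_le_left.trans le_sup_right)).trans (hc.range_inf_le_map _)

-- For `x = y + z` in the left side, `y = x - z` lies in `range b ⊓ (range a ⊔ range c)`.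
theorem IsIdempotentElem.range_inf_sup_range_eq_map_inf_sup_map (ha : IsIdempotentElem a)
    (hb : IsIdempotentElem b) (hc : IsIdempotentElem c) :
    range a ⊓ (range b ⊔ range c) =
      (range b ⊔ range c).map a ⊓ ((range a ⊔ range c).map b ⊔ (range a ⊔ range b).map c) := by
  refine le_antisymm (le_inf (ha.range_inf_le_map _) ?_)
    (inf_le_inf map_le_range (sup_le_sup map_le_range map_le_range))
  rintro x ⟨hxa, hx⟩
  obtain ⟨y, hyb, z, hzc, rfl⟩ := mem_sup.mp hx
  refine add_mem_sup (hb.range_inf_le_map _ ⟨hyb, ?_⟩) (hc.range_inf_le_map _ ⟨hzc, ?_⟩)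
  · simpa using sub_mem_sup hxa hzc
  · simpa using sub_mem_sup hxa hyb

theorem IsIdempotentElem.finrank_range_sup_sup [FiniteDimensional K E] (ha : IsIdempotentElem a)
    (hb : IsIdempotentElem b) (hc : IsIdempotentElem c) :
    (finrank K ↥(range a ⊔ (range b ⊔ range c)) : ℤ) =
      finrank K (range a) + finrank K (range b) + finrank K (range c)
        - finrank K ↥((range b ⊔ range c).map a) - finrank K ↥((range a ⊔ range c).map b)
        - finrank K ↥((range a ⊔ range b).map c)
        + finrank K ↥((range b ⊔ range c).map a ⊔
            ((range a ⊔ range c).map b ⊔ (range a ⊔ range b).map c)) := by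
  have hU := finrank_sup_sup_add_finrank_inf_add_finrank_inf (range a) (range b) (range c)
  have hU' := finrank_sup_sup_add_finrank_inf_add_finrank_inf
    ((range b ⊔ range c).map a) ((range a ⊔ range c).map b) ((range a ⊔ range b).map c)
  rw [← ha.range_inf_sup_range_eq_map_inf_sup_map hb hc,
    ← range_inf_range_eq_map_inf_map hb hc] at hU'
  omega

end

namespace Matrix

variable {R m n n₁ n₂ : Type*} [Fintype n] [Fintype n₁] [Fintype n₂]

theorem range_mulVecLin_fromCols [CommSemiring R] (M : Matrix m n₁ R) (N : Matrix m n₂ R) :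
    range (fromCols M N).mulVecLin = range M.mulVecLin ⊔ range N.mulVecLin := by
  apply le_antisymm
  · rintro x ⟨v, rfl⟩
    rw [mulVecLin_apply, ← Sum.elim_comp_inl_inr v, fromCols_mulVec_sumElim]
    exact add_mem_sup ⟨_, rfl⟩ ⟨_, rfl⟩
  · refine sup_le ?_ ?_ <;> rintro x ⟨v, rfl⟩
    exacts [⟨Sum.elim v 0, by simp⟩, ⟨Sum.elim 0 v, by simp⟩]

theorem range_mulVecLin_mul [CommSemiring R] (M : Matrix m n R) (N : Matrix n n₁ R) :
    range (M * N).mulVecLin = (range N.mulVecLin).map M.mulVecLin := by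
  rw [mulVecLin_mul, range_comp]

theorem _root_.IsIdempotentElem.mulVecLin [CommSemiring R] {M : Matrix n n R} (hM : IsIdempotentElem M) :
    IsIdempotentElem M.mulVecLin := by
  rw [IsIdempotentElem, Module.End.mul_eq_comp, ← mulVecLin_mul, hM]

end Matrix

/-- For `m × m` idempotent matrices `A`, `B`, `C`:
`rank [A, B, C] = rank A + rank B + rank C - rank [AB, AC] - rank [BA, BC] - rank [CA, CB]
  + rank [AB, AC, BA, BC, CA, CB]`. -/
theorem stmt_8 (m : ℕ) (A B C : Matrix (Fin m) (Fin m) ℂ)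
    (hA : A * A = A) (hB : B * B = B) (hC : C * C = C) :
    ((Matrix.fromCols A (Matrix.fromCols B C)).rank : ℤ) =
      (A.rank : ℤ) + (B.rank : ℤ) + (C.rank : ℤ)
        - ((Matrix.fromCols (A * B) (A * C)).rank : ℤ)
        - ((Matrix.fromCols (B * A) (B * C)).rank : ℤ)
        - ((Matrix.fromCols (C * A) (C * B)).rank : ℤ)
        + ((Matrix.fromCols (Matrix.fromCols (A * B) (A * C))
            (Matrix.fromCols (Matrix.fromCols (B * A) (B * C))
              (Matrix.fromCols (C * A) (C * B)))).rank : ℤ) := by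
  have key := IsIdempotentElem.mulVecLin hA |>.finrank_range_sup_sup
    (IsIdempotentElem.mulVecLin hB) (IsIdempotentElem.mulVecLin hC)
  simp only [Matrix.rank]
  repeat rw [range_mulVecLin_fromCols]
  repeat rw [range_mulVecLin_mul]
  repeat rw [← Submodule.map_sup]
  exact key
end

section
/- Let A be an m×n complex matrix and B an m×p complex matrix, and let G be an n×m matrix with A·G·A = A and H a p×m matrix with B·H·B = B. Then rank(rowBlock(A, B) − rowBlock(A, B)·colBlock(G, H)·rowBlock(A, B)) = rank(A·G·B) + rank(B·H·A) + rank(rowBlock(A, B)) − rank(A) − rank(B). -/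
open Matrix

/-!
Since `A G A = A` and `B H B = B`, the matrix `[A, B] - [A, B] [G; H] [A, B]` equals
`-[B H A, A G B]`. The column space of `B H A` lies in `col B` and that of `A G B` in `col A`;
as `B H` and `A G` fix `col B` and `col A` pointwise, the two column spaces meet exactly in
`col A ∩ col B`. Applying `rank [X, Y] + dim (col X ∩ col Y) = rank X + rank Y` to both
`[A, B]` and `[B H A, A G B]` gives the identity.
-/

namespace Matrix

variable {R : Type*} {m n p : Type*} [Fintype n] [Fintype p]

theorem fromCols_sub_mul_fromRows_mul_fromCols [Ring R] [Fintype m] {A : Matrix m n R}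
    {B : Matrix m p R} {G : Matrix n m R} {H : Matrix p m R}
    (hG : A * G * A = A) (hH : B * H * B = B) :
    fromCols A B - fromCols A B * fromRows G H * fromCols A B =
      -fromCols (B * H * A) (A * G * B) := by
  rw [fromCols_mul_fromRows, mul_fromCols, Matrix.add_mul, Matrix.add_mul, hG, hH]
  ext _ (_ | _) <;> simp

theorem rank_neg [CommRing R] (M : Matrix m n R) : (-M).rank = M.rank := by
  have : (-M).mulVecLin = -M.mulVecLin := by ext; simp
  rw [rank, rank, this, LinearMap.range_neg]

section CommSemiring

variable [CommSemiring R]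

theorem range_mulVecLin_fromCols_s9 (X : Matrix m n R) (Y : Matrix m p R) :
    LinearMap.range (fromCols X Y).mulVecLin =
      LinearMap.range X.mulVecLin ⊔ LinearMap.range Y.mulVecLin := by
  have : (fromCols X Y).col = Sum.elim X.col Y.col := by
    ext (_ | _) <;> rfl
  simp only [range_mulVecLin, this, Set.Sum.elim_range, Submodule.span_union]

theorem range_mulVecLin_mul_le [Fintype m] {l : Type*} (M : Matrix l m R) (N : Matrix m n R) :
    LinearMap.range (M * N).mulVecLin ≤ LinearMap.range M.mulVecLin := by
  rw [mulVecLin_mul]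
  exact LinearMap.range_comp_le_range _ _

theorem mul_mulVec_eq_self_of_mem_range [Fintype m] {B : Matrix m p R} {H : Matrix p m R}
    (hH : B * H * B = B) {v : m → R} (hv : v ∈ LinearMap.range B.mulVecLin) :
    (B * H) *ᵥ v = v := by
  obtain ⟨y, rfl⟩ := hv
  rw [mulVecLin_apply, mulVec_mulVec, hH]

theorem range_mul_mul_inf_range_mul_mul [Fintype m] {A : Matrix m n R} {B : Matrix m p R}
    {G : Matrix n m R} {H : Matrix p m R} (hG : A * G * A = A) (hH : B * H * B = B) :
    LinearMap.range (B * H * A).mulVecLin ⊓ LinearMap.range (A * G * B).mulVecLin =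
      LinearMap.range A.mulVecLin ⊓ LinearMap.range B.mulVecLin := by
  apply le_antisymm
  · rw [Matrix.mul_assoc B, Matrix.mul_assoc A, inf_comm (LinearMap.range A.mulVecLin)]
    exact inf_le_inf (range_mulVecLin_mul_le _ _) (range_mulVecLin_mul_le _ _)
  · rintro v ⟨⟨x, hx⟩, ⟨y, hy⟩⟩
    rw [mulVecLin_apply] at hx hy
    refine ⟨⟨x, ?_⟩, ⟨y, ?_⟩⟩
    · rw [mulVecLin_apply, ← mulVec_mulVec, hx]
      exact mul_mulVec_eq_self_of_mem_range hH ⟨y, hy⟩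
    · rw [mulVecLin_apply, ← mulVec_mulVec, hy]
      exact mul_mulVec_eq_self_of_mem_range hG ⟨x, hx⟩

end CommSemiring

theorem rank_fromCols_add_finrank_inf {K : Type*} [Field K] [Fintype m] (X : Matrix m n K)
    (Y : Matrix m p K) :
    (fromCols X Y).rank +
        Module.finrank K ↥(LinearMap.range X.mulVecLin ⊓ LinearMap.range Y.mulVecLin) =
      X.rank + Y.rank := by
  rw [rank, rank, rank, range_mulVecLin_fromCols_s9]
  exact Submodule.finrank_sup_add_finrank_inf_eq _ _

end Matrix

/-- For `A : m × n`, `B : m × p` with `{1}`-inverses `G`, `H`: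
`rank ([A, B] - [A, B] * [G; H] * [A, B])
  = rank (A*G*B) + rank (B*H*A) + rank [A, B] - rank A - rank B`. -/
theorem stmt_9 (m n p : ℕ) (A : Matrix (Fin m) (Fin n) ℂ) (B : Matrix (Fin m) (Fin p) ℂ)
    (G : Matrix (Fin n) (Fin m) ℂ) (H : Matrix (Fin p) (Fin m) ℂ)
    (hG : A * G * A = A) (hH : B * H * B = B) :
    ((Matrix.fromCols A B
        - Matrix.fromCols A B * Matrix.fromRows G H * Matrix.fromCols A B).rank : ℤ) =
      ((A * G * B).rank : ℤ) + ((B * H * A).rank : ℤ)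
        + ((Matrix.fromCols A B).rank : ℤ) - (A.rank : ℤ) - (B.rank : ℤ) := by
  rw [fromCols_sub_mul_fromRows_mul_fromCols hG hH, rank_neg]
  have hAB := rank_fromCols_add_finrank_inf A B
  have hBHA := rank_fromCols_add_finrank_inf (B * H * A) (A * G * B)
  rw [range_mul_mul_inf_range_mul_mul hG hH] at hBHA
  omega
end
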